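/- Let r be a positive integer, 𝕂 a field containing a primitive r-th root of unity z, and G a chordal simple graph on vertex set {1,…,ℓ} with perfect elimination ordering (v_1,…,v_ℓ) (after relabeling, assume v_k corresponds to coordinate x_k). For 0 ≤ i ≤ ℓ let A_i ⊆ M(G,r) be the subarrangement M(G_i,r) consisting of all hyperplanes of M(G,r) whose defining linear form involves only the variables x_1,…,x_i, where G_i is the subgraph of G induced by {v_1,…,v_i}. Then M(G,r) is supersolvable with this filtration: A_0 = ∅ ⊆ A_1 ⊆ ⋯ ⊆ A_ℓ = M(G,r), for each i the rank of A_i (the codimension in 𝕂^ℓ of the intersection of all hyperplanes in A_i) equals i, and for any two distinct hyperplanes H, H′ ∈ A_i ∖ A_{i−1} there exists H″ ∈ A_{i−1} with H ∩ H′ ⊆ H″. -/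
import Mathlib


open Finset
open scoped Classical

/-- The graphic monomial arrangement `M(G,r)`: the hyperplanes `{x_i − z^k x_j = 0}`
for every edge `{i,j}` of `G` and `1 ≤ k ≤ r`, together with the coordinate
hyperplanes `{x_i = 0}`. -/
noncomputable def monArr (K : Type) [Field K] (z : K) (r : ℕ) {V : Type} [Fintype V]
    (G : SimpleGraph V) : Finset (Submodule K (V → K)) :=
  (Finset.univ.image fun i : V =>
      LinearMap.ker (LinearMap.proj i : (V → K) →ₗ[K] K)) ∪
  (((Finset.univ : Finset (V × V)).filter (fun p => G.Adj p.1 p.2)).biUnion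
    (fun p => (Finset.range r).image fun k =>
      LinearMap.ker
        ((LinearMap.proj p.1 : (V → K) →ₗ[K] K) - z ^ (k + 1) • LinearMap.proj p.2)))

/-- The subarrangement `A_i = M(G_i, r)` of `M(G,r)` consisting of the hyperplanes
whose defining linear form involves only the variables `x_1,…,x_i` (here `G_i` is the
subgraph of `G` induced by the first `i` vertices). -/
noncomputable def monFiltr (K : Type) [Field K] (z : K) (r ℓ : ℕ)
    (G : SimpleGraph (Fin ℓ)) (i : ℕ) : Finset (Submodule K (Fin ℓ → K)) :=
  ((Finset.univ.filter fun j : Fin ℓ => (j : ℕ) < i).image fun j =>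
      LinearMap.ker (LinearMap.proj j : (Fin ℓ → K) →ₗ[K] K)) ∪
  (((Finset.univ : Finset (Fin ℓ × Fin ℓ)).filter
      (fun p => G.Adj p.1 p.2 ∧ (p.1 : ℕ) < i ∧ (p.2 : ℕ) < i)).biUnion
    (fun p => (Finset.range r).image fun k =>
      LinearMap.ker
        ((LinearMap.proj p.1 : (Fin ℓ → K) →ₗ[K] K) - z ^ (k + 1) • LinearMap.proj p.2)))

section helpers
variable {K : Type} [Field K]

lemma powMod (z : K) (r : ℕ) (hz1 : z ^ r = 1) (n : ℕ) : z ^ n = z ^ (n % r) := by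
  conv_lhs => rw [← Nat.div_add_mod n r]
  rw [pow_add, pow_mul, hz1, one_pow, one_mul]

lemma existsPow (z : K) (r : ℕ) (hz1 : z ^ r = 1) (hr : 0 < r) (m : ℕ) :
    ∃ k < r, z ^ (k + 1) = z ^ m := by
  refine ⟨(m + r - 1) % r, Nat.mod_lt _ hr, ?_⟩
  rw [powMod z r hz1 ((m + r - 1) % r + 1), powMod z r hz1 m]
  congr 1
  rw [Nat.mod_add_mod]
  have : m + r - 1 + 1 = m + r := by omega
  rw [this, Nat.add_mod_right]

lemma mem_monFiltr {ℓ : ℕ} (z : K) (r : ℕ) (G : SimpleGraph (Fin ℓ)) (i : ℕ)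
    (H : Submodule K (Fin ℓ → K)) :
    H ∈ monFiltr K z r ℓ G i
    ↔ ((∃ j : Fin ℓ, (j : ℕ) < i ∧ H = LinearMap.ker (LinearMap.proj j : (Fin ℓ → K) →ₗ[K] K)) ∨
      (∃ a b : Fin ℓ, G.Adj a b ∧ (a : ℕ) < i ∧ (b : ℕ) < i ∧ ∃ k, k < r ∧
        H = LinearMap.ker ((LinearMap.proj a : (Fin ℓ → K) →ₗ[K] K)
          - z ^ (k + 1) • LinearMap.proj b))) := by
  unfold monFiltr
  simp [Finset.mem_union, Finset.mem_image, Finset.mem_biUnion, Finset.mem_filter, Prod.exists,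
    eq_comm, and_assoc]

lemma mem_monArr {V : Type} [Fintype V] (z : K) (r : ℕ) (G : SimpleGraph V)
    (H : Submodule K (V → K)) :
    H ∈ monArr K z r G
    ↔ ((∃ j : V, H = LinearMap.ker (LinearMap.proj j : (V → K) →ₗ[K] K)) ∨
      (∃ a b : V, G.Adj a b ∧ ∃ k, k < r ∧
        H = LinearMap.ker ((LinearMap.proj a : (V → K) →ₗ[K] K)
          - z ^ (k + 1) • LinearMap.proj b))) := by
  unfold monArr
  simp [Finset.mem_union, Finset.mem_image, Finset.mem_biUnion, Finset.mem_filter, Prod.exists,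
    eq_comm, and_assoc]

lemma mem_kerSub {ℓ : ℕ} (a b : Fin ℓ) (c : K) (x : Fin ℓ → K) :
    x ∈ LinearMap.ker ((LinearMap.proj a : (Fin ℓ → K) →ₗ[K] K) - c • LinearMap.proj b) ↔
      x a - c * x b = 0 := by
  simp [LinearMap.mem_ker]

lemma mem_kerProj {ℓ : ℕ} (a : Fin ℓ) (x : Fin ℓ → K) :
    x ∈ LinearMap.ker (LinearMap.proj a : (Fin ℓ → K) →ₗ[K] K) ↔ x a = 0 := by
  simp [LinearMap.mem_ker]

lemma ker_swap {ℓ : ℕ} (a b : Fin ℓ) (c d : K) (hcd : c * d = 1) :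
    LinearMap.ker ((LinearMap.proj a : (Fin ℓ → K) →ₗ[K] K) - c • LinearMap.proj b)
      = LinearMap.ker ((LinearMap.proj b : (Fin ℓ → K) →ₗ[K] K) - d • LinearMap.proj a) := by
  ext x
  rw [mem_kerSub, mem_kerSub]
  constructor
  · intro h; linear_combination (-d) * h - x b * hcd
  · intro h; linear_combination (-c) * h - x a * hcd

/-- The common intersection: functions vanishing on the first `i` coordinates. -/
def NN (K : Type) [Field K] (ℓ i : ℕ) : Submodule K (Fin ℓ → K) where
  carrier := {x | ∀ j : Fin ℓ, (j : ℕ) < i → x j = 0}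
  add_mem' := by intro a b ha hb j hj; simp only [Pi.add_apply, ha j hj, hb j hj, add_zero]
  zero_mem' := by intro j hj; rfl
  smul_mem' := by intro c a ha j hj; simp only [Pi.smul_apply, ha j hj, smul_eq_mul, mul_zero]

noncomputable def eNN (K : Type) [Field K] (ℓ i : ℕ) (hi : i ≤ ℓ) :
    NN K ℓ i ≃ₗ[K] (Fin (ℓ - i) → K) where
  toFun x t := x.1 ⟨(t : ℕ) + i, by omega⟩
  map_add' x y := rfl
  map_smul' c x := rfl
  invFun g := ⟨fun j => if h : (j : ℕ) < i then 0 else g ⟨(j : ℕ) - i, by omega⟩, by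
    intro j hj; exact dif_pos hj⟩
  left_inv x := by
    apply Subtype.ext
    funext j
    by_cases h : (j : ℕ) < i
    · simp only [dif_pos h]; exact (x.2 j h).symm
    · simp only [dif_neg h]
      exact congrArg x.1 (Fin.ext (by simp only [Fin.val_mk]; omega))
  right_inv g := by
    funext t
    simp only
    rw [dif_neg (by omega)]
    exact congrArg g (Fin.ext (by simp only [Fin.val_mk]; omega))

lemma finrank_NN (ℓ i : ℕ) (hi : i ≤ ℓ) : Module.finrank K (NN K ℓ i) = ℓ - i := by
  rw [(eNN K ℓ i hi).finrank_eq]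
  simp [Module.finrank_pi]

lemma inf_monFiltr {ℓ : ℕ} (z : K) (r : ℕ) (G : SimpleGraph (Fin ℓ)) (i : ℕ) :
    (monFiltr K z r ℓ G i).inf id = NN K ℓ i := by
  apply le_antisymm
  · intro x hx j hj
    have hmem : LinearMap.ker (LinearMap.proj j : (Fin ℓ → K) →ₗ[K] K) ∈ monFiltr K z r ℓ G i :=
      (mem_monFiltr z r G i _).mpr (Or.inl ⟨j, hj, rfl⟩)
    have := Finset.inf_le (f := id) hmem hx
    exact (mem_kerProj j x).mp this
  · apply Finset.le_inf
    intro H hH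
    rw [mem_monFiltr] at hH
    rcases hH with ⟨j, hj, rfl⟩ | ⟨a, b, hab, ha, hb, k, hk, rfl⟩
    · intro x hx
      exact (mem_kerProj j x).mpr (hx j hj)
    · intro x hx
      rw [id, mem_kerSub]
      rw [hx a ha, hx b hb]
      ring

end helpers

/-- Let `G` be a chordal graph on `{1,…,ℓ}` whose natural vertex
ordering is a perfect elimination ordering, and let `z ∈ 𝕂` be a primitive `r`-th
root of unity.  Then `M(G,r)` is supersolvable with the filtration
`A_i = M(G_i,r)` (hyperplanes involving only `x_1,…,x_i`):  `A_0 = ∅`, the filtration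
is increasing with `A_ℓ = M(G,r)`, the rank of `A_i` is `i` (i.e. the intersection of
the hyperplanes of `A_i` has dimension `ℓ − i`), and any two distinct
`H, H' ∈ A_i ∖ A_{i−1}` satisfy `H ∩ H' ⊆ H''` for some `H'' ∈ A_{i−1}`. -/
theorem stmt14 (ℓ : ℕ) (K : Type) [Field K] (r : ℕ) (hr : 0 < r)
    (z : K) (hz : IsPrimitiveRoot z r)
    (G : SimpleGraph (Fin ℓ))
    (hPEO : ∀ k j l : Fin ℓ, j < k → l < k → j ≠ l →
      G.Adj j k → G.Adj l k → G.Adj j l) :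
    monFiltr K z r ℓ G 0 = ∅ ∧
    (∀ i : ℕ, i < ℓ → monFiltr K z r ℓ G i ⊆ monFiltr K z r ℓ G (i + 1)) ∧
    monFiltr K z r ℓ G ℓ = monArr K z r G ∧
    (∀ i : ℕ, i ≤ ℓ →
      Module.finrank K ↥((monFiltr K z r ℓ G i).inf id) = ℓ - i) ∧
    (∀ i : ℕ, 1 ≤ i → i ≤ ℓ →
      ∀ H ∈ monFiltr K z r ℓ G i, ∀ H' ∈ monFiltr K z r ℓ G i,
        H ∉ monFiltr K z r ℓ G (i - 1) → H' ∉ monFiltr K z r ℓ G (i - 1) →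
        H ≠ H' →
        ∃ H'' ∈ monFiltr K z r ℓ G (i - 1), H ⊓ H' ≤ H'') := by
  have hz1 : z ^ r = 1 := hz.pow_eq_one
  have hzne : z ≠ 0 := hz.ne_zero hr.ne'
  refine ⟨?_, ?_, ?_, ?_, ?_⟩
  · rw [Finset.eq_empty_iff_forall_notMem]
    intro H h
    rw [mem_monFiltr] at h
    rcases h with ⟨j, hj, _⟩ | ⟨a, b, _, ha, _⟩ <;> omega
  · intro i _ H hH
    rw [mem_monFiltr] at hH ⊢
    rcases hH with ⟨j, hj, rfl⟩ | ⟨a, b, hab, ha, hb, k, hk, rfl⟩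
    · exact Or.inl ⟨j, by omega, rfl⟩
    · exact Or.inr ⟨a, b, hab, by omega, by omega, k, hk, rfl⟩
  · ext H
    rw [mem_monFiltr, mem_monArr]
    constructor
    · rintro (⟨j, _, rfl⟩ | ⟨a, b, hab, _, _, k, hk, rfl⟩)
      · exact Or.inl ⟨j, rfl⟩
      · exact Or.inr ⟨a, b, hab, k, hk, rfl⟩
    · rintro (⟨j, rfl⟩ | ⟨a, b, hab, k, hk, rfl⟩)
      · exact Or.inl ⟨j, j.isLt, rfl⟩
      · exact Or.inr ⟨a, b, hab, a.isLt, b.isLt, k, hk, rfl⟩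
  · intro i hi
    rw [inf_monFiltr]
    exact finrank_NN ℓ i hi
  · intro i h1 hiℓ H hHi H' hHi' hHo hHo' hne
    set m : Fin ℓ := ⟨i - 1, by omega⟩ with hm
    have hmv : (m : ℕ) = i - 1 := rfl
    -- normalization
    have norm : ∀ H, H ∈ monFiltr K z r ℓ G i → H ∉ monFiltr K z r ℓ G (i - 1) →
        H = LinearMap.ker (LinearMap.proj m : (Fin ℓ → K) →ₗ[K] K) ∨
        ∃ b : Fin ℓ, ∃ k : ℕ, (b : ℕ) < i - 1 ∧ G.Adj m b ∧ k < r ∧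
          H = LinearMap.ker ((LinearMap.proj m : (Fin ℓ → K) →ₗ[K] K)
            - z ^ (k + 1) • LinearMap.proj b) := by
      intro H hHi hHo
      rw [mem_monFiltr] at hHi hHo
      push_neg at hHo
      rcases hHi with ⟨j, hj, rfl⟩ | ⟨a, b, hab, ha, hb, k, hk, rfl⟩
      · left
        have hji : (j : ℕ) = i - 1 := by
          by_contra hc
          exact (hHo.1 j (by omega)) rfl
        have : j = m := Fin.ext (by rw [hmv]; omega)
        rw [this]
      · right
        have hnotboth : ¬ ((a : ℕ) < i - 1 ∧ (b : ℕ) < i - 1) := by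
          intro ⟨ha', hb'⟩
          exact hHo.2 a b hab ha' hb' k hk rfl
        by_cases hA : (a : ℕ) = i - 1
        · have hba : b ≠ a := hab.ne'
          have hbm : (b : ℕ) < i - 1 := by
            rcases Nat.lt_or_ge (b : ℕ) (i-1) with h | h
            · exact h
            · exfalso; exact hba (Fin.ext (by omega))
          have ham : a = m := Fin.ext (by rw [hmv]; omega)
          exact ⟨b, k, hbm, ham ▸ hab, hk, by rw [ham]⟩
        · have hB : (b : ℕ) = i - 1 := by omega
          have hbm : b = m := Fin.ext (by rw [hmv]; omega)
          have haab : a ≠ b := hab.ne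
          have ham : (a : ℕ) < i - 1 := by
            rcases Nat.lt_or_ge (a : ℕ) (i-1) with h | h
            · exact h
            · exfalso; exact haab (Fin.ext (by omega))
          obtain ⟨k', hk', he⟩ := existsPow z r hz1 hr ((k + 1) * (r - 1))
          have hinv : z ^ (k + 1) * z ^ (k' + 1) = 1 := by
            rw [he, ← pow_add]
            have harith : k + 1 + (k + 1) * (r - 1) = (k + 1) * r := by
              have h2 : (k+1) * (r-1) = (k+1) * r - (k+1) := by rw [Nat.mul_sub, mul_one]
              have h3 : k + 1 ≤ (k+1) * r := Nat.le_mul_of_pos_right _ hr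
              omega
            rw [harith, pow_mul', hz1, one_pow]
          refine ⟨a, k', ham, hbm ▸ hab.symm, hk', ?_⟩
          rw [ker_swap a b (z ^ (k + 1)) (z ^ (k' + 1)) hinv, hbm]
    have memCoord : ∀ b : Fin ℓ, (b : ℕ) < i - 1 →
        LinearMap.ker (LinearMap.proj b : (Fin ℓ → K) →ₗ[K] K) ∈ monFiltr K z r ℓ G (i - 1) :=
      fun b hb => (mem_monFiltr z r G (i-1) _).mpr (Or.inl ⟨b, hb, rfl⟩)
    obtain hN | ⟨b, k, hbm, hadjb, hk, hHeq⟩ := norm H hHi hHo <;>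
      obtain hN' | ⟨b', k', hbm', hadjb', hk', hHeq'⟩ := norm H' hHi' hHo'
    · exact absurd (hN.trans hN'.symm) hne
    · -- H coordinate, H' edge
      refine ⟨_, memCoord b' hbm', ?_⟩
      intro x hx
      rw [Submodule.mem_inf, hN, hHeq', mem_kerProj, mem_kerSub] at hx
      rw [mem_kerProj]
      obtain ⟨h1', h2'⟩ := hx
      have : z ^ (k' + 1) * x b' = 0 := by linear_combination h1' - h2'
      rcases mul_eq_zero.mp this with h | h
      · exact absurd h (pow_ne_zero _ hzne)
      · exact h
    · -- H edge, H' coordinate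
      refine ⟨_, memCoord b hbm, ?_⟩
      intro x hx
      rw [Submodule.mem_inf, hN', hHeq, mem_kerProj, mem_kerSub] at hx
      rw [mem_kerProj]
      obtain ⟨h1', h2'⟩ := hx
      have : z ^ (k + 1) * x b = 0 := by linear_combination h2' - h1'
      rcases mul_eq_zero.mp this with h | h
      · exact absurd h (pow_ne_zero _ hzne)
      · exact h
    · -- both edges
      by_cases hbb : b = b'
      · subst hbb
        by_cases hcc : z ^ (k + 1) = z ^ (k' + 1)
        · exact absurd (by rw [hHeq, hHeq', hcc]) hne
        · refine ⟨_, memCoord b hbm, ?_⟩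
          intro x hx
          rw [Submodule.mem_inf, hHeq, hHeq', mem_kerSub, mem_kerSub] at hx
          rw [mem_kerProj]
          obtain ⟨h1', h2'⟩ := hx
          have : (z ^ (k' + 1) - z ^ (k + 1)) * x b = 0 := by linear_combination h1' - h2'
          rcases mul_eq_zero.mp this with h | h
          · exact absurd (sub_eq_zero.mp h) (Ne.symm hcc)
          · exact h
      · have hadj : G.Adj b b' := by
          refine hPEO m b b' ?_ ?_ hbb hadjb.symm hadjb'.symm
          · exact Fin.lt_def.mpr (by rw [hmv]; omega)
          · exact Fin.lt_def.mpr (by rw [hmv]; omega)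
        obtain ⟨k'', hk'', he⟩ := existsPow z r hz1 hr ((k' + 1) + (k + 1) * (r - 1))
        have key : z ^ (k'' + 1) * z ^ (k + 1) = z ^ (k' + 1) := by
          rw [he, ← pow_add]
          have harith : k' + 1 + (k + 1) * (r - 1) + (k + 1) = (k' + 1) + (k + 1) * r := by
            have h2 : (k+1) * (r-1) = (k+1) * r - (k+1) := by rw [Nat.mul_sub, mul_one]
            have h3 : k + 1 ≤ (k+1) * r := Nat.le_mul_of_pos_right _ hr
            omega
          rw [harith, pow_add, pow_mul', hz1, one_pow, mul_one]
        refine ⟨LinearMap.ker ((LinearMap.proj b : (Fin ℓ → K) →ₗ[K] K)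
            - z ^ (k'' + 1) • LinearMap.proj b'), ?_, ?_⟩
        · exact (mem_monFiltr z r G (i-1) _).mpr
            (Or.inr ⟨b, b', hadj, hbm, hbm', k'', hk'', rfl⟩)
        · intro x hx
          rw [Submodule.mem_inf, hHeq, hHeq', mem_kerSub, mem_kerSub] at hx
          rw [mem_kerSub]
          obtain ⟨h1', h2'⟩ := hx
          have hmul : z ^ (k + 1) * (x b - z ^ (k'' + 1) * x b') = 0 := by
            linear_combination h2' - h1' - x b' * key
          rcases mul_eq_zero.mp hmul with h | h
          · exact absurd h (pow_ne_zero _ hzne)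
          · exact h
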